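/- If a sequence of coefficients (c_{j,k}) for j ∈ ℕ, k ∈ {0,...,2^j - 1} has at most C·2^{δj} nonvanishing entries at each generation j (with δ < 1), and satisfies |c_{j,k}| ≤ C'·2^{-Aj} for some A ≤ 0, then for every p with 0 < p < (1-δ)/(-A) (interpreting this as p arbitrary when A = 0), there exists s > 0 and a constant C'' such that for all j, 2^{-j} Σ_k |c_{j,k}|^p ≤ C''·2^{-spj}. -/
import Mathlib


open Finset

/-- Sparse coefficient arrays belong to a Besov space `B^{s,∞}_p` with `s > 0`:
if at each generation `j` the array `(c j k)_{k < 2^j}` has at most `C·2^{δj}`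
nonvanishing entries (`δ < 1`) and satisfies `|c j k| ≤ C'·2^{-Aj}` with `A ≤ 0`,
then for every `0 < p < (1-δ)/(-A)` (any `p > 0` when `A = 0`) there are `s > 0`
and `C''` with `2^{-j} Σ_k |c j k|^p ≤ C''·2^{-spj}` for all `j`. -/
theorem sparse_besov (c : ℕ → ℕ → ℝ) (δ A C C' : ℝ)
    (hδ : δ < 1) (hC : 0 < C) (hC' : 0 < C') (hA : A ≤ 0)
    (hsparse : ∀ j : ℕ,
      (((Finset.range (2 ^ j)).filter (fun k => c j k ≠ 0)).card : ℝ) ≤ C * 2 ^ (δ * j))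
    (hbound : ∀ j : ℕ, ∀ k ∈ Finset.range (2 ^ j), |c j k| ≤ C' * 2 ^ (-A * j)) :
    ∀ p : ℝ, 0 < p → (A = 0 ∨ p * (-A) < 1 - δ) →
      ∃ s : ℝ, 0 < s ∧ ∃ C'' : ℝ, 0 < C'' ∧
        ∀ j : ℕ, 2 ^ (-(j : ℝ)) * ∑ k ∈ Finset.range (2 ^ j), |c j k| ^ p
          ≤ C'' * 2 ^ (-(s * p * j)) := by
  intro p hp hcase
  have hone : (0:ℝ) < 1 - δ + A * p := by
    rcases hcase with h | h
    · rw [h]; simpa using hδ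
    · nlinarith
  refine ⟨(1 - δ + A * p) / p, by positivity, C * C' ^ p, by positivity, fun j => ?_⟩
  have hM : (0:ℝ) ≤ C' * 2 ^ (-A * (j:ℝ)) := by positivity
  have hsum : ∑ k ∈ Finset.range (2 ^ j), |c j k| ^ p
      ≤ C * 2 ^ (δ * j) * (C' * 2 ^ (-A * (j:ℝ))) ^ p := by
    have h1 : ∑ k ∈ Finset.range (2 ^ j), |c j k| ^ p
        = ∑ k ∈ (Finset.range (2 ^ j)).filter (fun k => c j k ≠ 0), |c j k| ^ p := by
      refine (Finset.sum_filter_of_ne fun k _ hne => ?_).symm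
      intro hc
      apply hne
      rw [hc] at hne
      simp [Real.zero_rpow hp.ne'] at hne
    have h2 : ∑ k ∈ (Finset.range (2 ^ j)).filter (fun k => c j k ≠ 0), |c j k| ^ p
        ≤ (((Finset.range (2 ^ j)).filter (fun k => c j k ≠ 0)).card : ℝ)
          * (C' * 2 ^ (-A * (j:ℝ))) ^ p := by
      rw [← nsmul_eq_mul]
      refine Finset.sum_le_card_nsmul _ _ _ fun k hk => ?_
      exact Real.rpow_le_rpow (abs_nonneg _)
        (hbound j k (Finset.mem_filter.mp hk).1) hp.le
    have h3 : (((Finset.range (2 ^ j)).filter (fun k => c j k ≠ 0)).card : ℝ)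
          * (C' * 2 ^ (-A * (j:ℝ))) ^ p ≤ C * 2 ^ (δ * j) * (C' * 2 ^ (-A * (j:ℝ))) ^ p :=
      mul_le_mul_of_nonneg_right (hsparse j) (Real.rpow_nonneg hM p)
    linarith [h1 ▸ le_trans h2 h3]
  have h2pos : (0:ℝ) < 2 ^ (-(j:ℝ)) := by positivity
  calc 2 ^ (-(j:ℝ)) * ∑ k ∈ Finset.range (2 ^ j), |c j k| ^ p
      ≤ 2 ^ (-(j:ℝ)) * (C * 2 ^ (δ * j) * (C' * 2 ^ (-A * (j:ℝ))) ^ p) :=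
        mul_le_mul_of_nonneg_left hsum h2pos.le
    _ = C * C' ^ p * (2 ^ (-(j:ℝ)) * 2 ^ (δ * (j:ℝ)) * 2 ^ (-A * (j:ℝ) * p)) := by
        rw [Real.mul_rpow hC'.le (by positivity),
          ← Real.rpow_mul (by norm_num : (0:ℝ) ≤ 2)]
        ring
    _ = C * C' ^ p * 2 ^ (-((1 - δ + A * p) / p * p * (j:ℝ))) := by
        rw [← Real.rpow_add two_pos, ← Real.rpow_add two_pos,
          div_mul_cancel₀ _ hp.ne']
        ring_nf
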